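/- Let H_{α₂}, H_{α₁ᵃ}, H_{α₁ᵇ}, H_{β₁}, H_{β₂} be finite-dimensional complex Hilbert spaces and set H_{α₁} := H_{α₁ᵃ} ⊗ H_{α₁ᵇ}. Let φ_α ∈ H_{α₂} ⊗ H_{α₁} have Schmidt rank at most D when regarded as an element of (H_{α₂} ⊗ H_{α₁ᵃ}) ⊗ H_{α₁ᵇ}, and let φ_β ∈ H_{β₁} ⊗ H_{β₂}. Let K₁, …, K_I be linear operators on H_{α₁} ⊗ H_{β₁}, set H_γ := ℂ^I with standard basis (e_i), and define Ψ := Σ_{i=1}^{I} τ(((1_{α₂} ⊗ K_i ⊗ 1_{β₂})(σ(φ_α ⊗ φ_β))) ⊗ e_i), where σ is the canonical reordering into H_{α₂} ⊗ (H_{α₁} ⊗ H_{β₁}) ⊗ H_{β₂} and τ reorders into (H_{α₂} ⊗ H_{α₁ᵃ}) ⊗ (H_{α₁ᵇ} ⊗ H_γ ⊗ H_{β₁} ⊗ H_{β₂}). Then the Schmidt rank of Ψ across this bipartition is at most D · I · dim(H_{α₁}) · dim(H_{β₁}). -/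
import Mathlib


/-- The Schmidt rank of a vector in a tensor product of two Hilbert spaces `ℂ^α ⊗ ℂ^β`
(represented by its coordinates `x : α × β → ℂ`): the least number `r` of simple tensors
`v ⊗ w` (with coordinates `(a,b) ↦ v a * w b`) needed to write `x` as a sum of `r` of them. -/
noncomputable def schmidtRank {α β : Type*} (x : α × β → ℂ) : ℕ :=
  sInf {r : ℕ | ∃ (v : Fin r → α → ℂ) (w : Fin r → β → ℂ),
    ∀ p : α × β, x p = ∑ k, v k p.1 * w k p.2}

lemma sr_le_card {α β ι : Type*} [Fintype ι] (x : α × β → ℂ)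
    (v : ι → α → ℂ) (w : ι → β → ℂ) (h : ∀ p : α × β, x p = ∑ k, v k p.1 * w k p.2) :
    schmidtRank x ≤ Fintype.card ι := by
  apply Nat.sInf_le
  refine ⟨fun k => v ((Fintype.equivFin ι).symm k), fun k => w ((Fintype.equivFin ι).symm k),
    fun p => ?_⟩
  rw [h p, ← Equiv.sum_comp (Fintype.equivFin ι).symm (fun j => v j p.1 * w j p.2)]

lemma sr_decomp {α β : Type*} [Fintype α] (x : α × β → ℂ) :
    ∃ (v : Fin (schmidtRank x) → α → ℂ) (w : Fin (schmidtRank x) → β → ℂ),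
      ∀ p : α × β, x p = ∑ k, v k p.1 * w k p.2 := by
  classical
  have hne : {r : ℕ | ∃ (v : Fin r → α → ℂ) (w : Fin r → β → ℂ),
      ∀ p : α × β, x p = ∑ k, v k p.1 * w k p.2}.Nonempty := by
    refine ⟨Fintype.card α, fun k a => if a = (Fintype.equivFin α).symm k then 1 else 0,
      fun k b => x ((Fintype.equivFin α).symm k, b), fun p => ?_⟩
    rw [← Equiv.sum_comp (Fintype.equivFin α)
      (fun k => (if p.1 = (Fintype.equivFin α).symm k then (1:ℂ) else 0) *
        x ((Fintype.equivFin α).symm k, p.2))]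
    simp
  exact Nat.sInf_mem hne

/-- Hilbert spaces `H_{α₂}, H_{α₁ᵃ}, H_{α₁ᵇ}, H_{β₁}, H_{β₂}` are represented concretely as
`ℂ^{ια₂}` etc., with `H_{α₁} := H_{α₁ᵃ} ⊗ H_{α₁ᵇ}`. Suppose `φ_α ∈ H_{α₂} ⊗ H_{α₁}` has
Schmidt rank at most `D` regarded in `(H_{α₂} ⊗ H_{α₁ᵃ}) ⊗ H_{α₁ᵇ}`, and let
`φ_β ∈ H_{β₁} ⊗ H_{β₂}`, `Kᵢ` operators on `H_{α₁} ⊗ H_{β₁}`, `H_γ := ℂ^I`. Then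
`Ψ := ∑ᵢ τ(((1_{α₂} ⊗ Kᵢ ⊗ 1_{β₂})(σ(φ_α ⊗ φ_β))) ⊗ eᵢ)`, regarded in
`(H_{α₂} ⊗ H_{α₁ᵃ}) ⊗ (H_{α₁ᵇ} ⊗ H_γ ⊗ H_{β₁} ⊗ H_{β₂})` (coordinates given below),
has Schmidt rank at most `D · I · dim H_{α₁} · dim H_{β₁}`. -/
theorem schmidtRank_stinespring_inner_cut {ια₂ ια₁a ια₁b ιβ₁ ιβ₂ : Type*}
    [Fintype ια₂] [Fintype ια₁a] [Fintype ια₁b] [Fintype ιβ₁] [Fintype ιβ₂] {I D : ℕ}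
    (φα : ια₂ × (ια₁a × ια₁b) → ℂ)
    (hφα : schmidtRank (fun p : (ια₂ × ια₁a) × ια₁b => φα (p.1.1, (p.1.2, p.2))) ≤ D)
    (φβ : ιβ₁ × ιβ₂ → ℂ)
    (K : Fin I → Matrix ((ια₁a × ια₁b) × ιβ₁) ((ια₁a × ια₁b) × ιβ₁) ℂ)
    (Ψ : (ια₂ × ια₁a) × (ια₁b × Fin I × ιβ₁ × ιβ₂) → ℂ)
    (hΨ : ∀ a₂ aa ab i b₁ b₂, Ψ ((a₂, aa), (ab, i, b₁, b₂)) =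
      ∑ a₁' : ια₁a × ια₁b, ∑ b₁' : ιβ₁,
        K i ((aa, ab), b₁) (a₁', b₁') * φα (a₂, a₁') * φβ (b₁', b₂)) :
    schmidtRank Ψ ≤ D * I * (Fintype.card ια₁a * Fintype.card ια₁b) * Fintype.card ιβ₁ := by
  classical
  obtain ⟨v, w, hvw⟩ := sr_decomp (fun p : (ια₂ × ια₁a) × ια₁b => φα (p.1.1, (p.1.2, p.2)))
  have hφα' : ∀ (a₂ : ια₂) (aa : ια₁a) (ab : ια₁b),
      φα (a₂, (aa, ab)) = ∑ k, v k (a₂, aa) * w k ab := fun a₂ aa ab => hvw ((a₂, aa), ab)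
  rcases le_total (Fintype.card ια₁a) (Fintype.card ια₁b * Fintype.card ιβ₁) with hcase | hcase
  · -- decomposition of size r * I * (card ια₁a)^2
    have hb := sr_le_card Ψ
      (fun q : Fin (schmidtRank (fun p : (ια₂ × ια₁a) × ια₁b => φα (p.1.1, (p.1.2, p.2)))) × Fin I × ια₁a × ια₁a => fun p : ια₂ × ια₁a =>
        if p.2 = q.2.2.1 then v q.1 (p.1, q.2.2.2) else 0)
      (fun q : Fin (schmidtRank (fun p : (ια₂ × ια₁a) × ια₁b => φα (p.1.1, (p.1.2, p.2)))) × Fin I × ια₁a × ια₁a => fun p : ια₁b × Fin I × ιβ₁ × ιβ₂ =>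
        if p.2.1 = q.2.1 then
          ∑ ab' : ια₁b, ∑ b₁' : ιβ₁,
            K q.2.1 ((q.2.2.1, p.1), p.2.2.1) ((q.2.2.2, ab'), b₁') * w q.1 ab' *
              φβ (b₁', p.2.2.2)
        else 0)
      ?_
    · refine hb.trans ?_
      simp only [Fintype.card_prod, Fintype.card_fin]
      calc schmidtRank (fun p : (ια₂ × ια₁a) × ια₁b => φα (p.1.1, (p.1.2, p.2))) * (I * (Fintype.card ια₁a * Fintype.card ια₁a))
          = schmidtRank (fun p : (ια₂ × ια₁a) × ια₁b => φα (p.1.1, (p.1.2, p.2))) * I * Fintype.card ια₁a * Fintype.card ια₁a := by ring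
        _ ≤ D * I * Fintype.card ια₁a * (Fintype.card ια₁b * Fintype.card ιβ₁) :=
            Nat.mul_le_mul (Nat.mul_le_mul (Nat.mul_le_mul_right _ hφα) le_rfl) hcase
        _ = D * I * (Fintype.card ια₁a * Fintype.card ια₁b) * Fintype.card ιβ₁ := by ring
    · rintro ⟨⟨a₂, aa⟩, ab, i, b₁, b₂⟩
      rw [hΨ]
      simp only [Fintype.sum_prod_type, ite_mul, mul_ite, zero_mul, mul_zero, Finset.sum_ite_irrel, Finset.sum_const_zero, Finset.sum_ite_eq, Finset.sum_ite_eq', Finset.mem_univ, if_true]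
      simp only [hφα', Finset.mul_sum, Finset.sum_mul]
      conv_lhs => enter [2, x, 2, y]; rw [Finset.sum_comm]
      conv_lhs => enter [2, x]; rw [Finset.sum_comm]
      rw [Finset.sum_comm]
      refine Finset.sum_congr rfl fun k _ => Finset.sum_congr rfl fun x _ =>
        Finset.sum_congr rfl fun y _ => Finset.sum_congr rfl fun b _ => by ring
  · -- decomposition of size r * I * (card ια₁b * card ιβ₁)^2
    have hb := sr_le_card Ψ
      (fun q : Fin (schmidtRank (fun p : (ια₂ × ια₁a) × ια₁b => φα (p.1.1, (p.1.2, p.2)))) ×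
          Fin I × (ια₁b × ιβ₁) × ια₁b × ιβ₁ => fun p : ια₂ × ια₁a =>
        ∑ aa' : ια₁a, v q.1 (p.1, aa') *
          K q.2.1 ((p.2, q.2.2.1.1), q.2.2.1.2) ((aa', q.2.2.2.1), q.2.2.2.2))
      (fun q : Fin (schmidtRank (fun p : (ια₂ × ια₁a) × ια₁b => φα (p.1.1, (p.1.2, p.2)))) ×
          Fin I × (ια₁b × ιβ₁) × ια₁b × ιβ₁ => fun p : ια₁b × Fin I × ιβ₁ × ιβ₂ =>
        if p.2.1 = q.2.1 then
          if p.1 = q.2.2.1.1 then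
            if p.2.2.1 = q.2.2.1.2 then w q.1 q.2.2.2.1 * φβ (q.2.2.2.2, p.2.2.2) else 0
          else 0
        else 0)
      ?_
    · refine hb.trans ?_
      simp only [Fintype.card_prod, Fintype.card_fin]
      calc schmidtRank (fun p : (ια₂ × ια₁a) × ια₁b => φα (p.1.1, (p.1.2, p.2))) *
            (I * (Fintype.card ια₁b * Fintype.card ιβ₁ *
              (Fintype.card ια₁b * Fintype.card ιβ₁)))
          = schmidtRank (fun p : (ια₂ × ια₁a) × ια₁b => φα (p.1.1, (p.1.2, p.2))) * I *
              (Fintype.card ια₁b * Fintype.card ιβ₁) * (Fintype.card ια₁b * Fintype.card ιβ₁) :=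
            by ring
        _ ≤ D * I * (Fintype.card ια₁b * Fintype.card ιβ₁) * Fintype.card ια₁a :=
            Nat.mul_le_mul (Nat.mul_le_mul (Nat.mul_le_mul_right _ hφα) le_rfl) hcase
        _ = D * I * (Fintype.card ια₁a * Fintype.card ια₁b) * Fintype.card ιβ₁ := by ring
    · rintro ⟨⟨a₂, aa⟩, ab, i, b₁, b₂⟩
      rw [hΨ]
      simp only [Fintype.sum_prod_type, ite_mul, mul_ite, zero_mul, mul_zero,
        Finset.sum_ite_irrel, Finset.sum_const_zero, Finset.sum_ite_eq, Finset.sum_ite_eq',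
        Finset.mem_univ, if_true]
      simp only [hφα', Finset.mul_sum, Finset.sum_mul]
      conv_lhs => enter [2, x, 2, y]; rw [Finset.sum_comm]
      conv_lhs => enter [2, x]; rw [Finset.sum_comm]
      rw [Finset.sum_comm]
      conv_lhs => enter [2, k]; rw [Finset.sum_comm]
      conv_lhs => enter [2, k, 2, y]; rw [Finset.sum_comm]
      refine Finset.sum_congr rfl fun k _ => Finset.sum_congr rfl fun y _ =>
        Finset.sum_congr rfl fun b _ => Finset.sum_congr rfl fun x _ => by ring
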